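/- arXiv:1606.09000 — 5 statements merged into one kernel-verified Lean document; each statement's English description precedes it below -/
import Mathlib

section
/- Let G be a graph with k + ℓ ≥ 2, and suppose S ⊆ V(G) is a q-dominating set with |S| ≤ k and |N^p_G(S)| ≤ ℓ, where p > q/2. Let Y = {y ∈ V(G) : |N^p_G[y]| ≤ k + ℓ}. Then |Y| ≤ k · (k+ℓ)^q. -/
/-- `distLE G p u v`: distance at most `p` between `u` and `v` in `G`. -/
def distLE {V : Type*} (G : SimpleGraph V) (p : ℕ) (u v : V) : Prop :=
  ∃ w : G.Walk u v, w.length ≤ p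

/-- Distance-`p` closed neighborhood `N^p_G[S]`. -/
def ballClosed {V : Type*} (G : SimpleGraph V) (p : ℕ) (S : Set V) : Set V :=
  {v | ∃ u ∈ S, distLE G p u v}

/-- Distance-`p` open neighborhood `N^p_G(S)`. -/
def ballOpen {V : Type*} (G : SimpleGraph V) (p : ℕ) (S : Set V) : Set V :=
  ballClosed G p S \ S

/-!
The closed `p`-ball around `S` has at most `|S| + |N^p(S)| ≤ k + ℓ` vertices, and so has the
closed `p`-ball around any `y ∈ Y`. A `q`-walk from `S` to `y` has length `< 2p`, so each of
its vertices `x` lies at distance `< p` from one of its ends; then `x` and its neighbours fit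
into the `p`-ball around that end, so `deg x < k + ℓ`. Hence `Y` is covered by the `|S|` sets of
vertices reachable from `S` by walks of length `≤ q` through vertices of degree `< k + ℓ`, each
of size at most `(k + ℓ)^q`.
-/

open SimpleGraph

theorem Set.ncard_biUnion_le_ncard_mul {ι α : Type*} {t : Set ι} (ht : t.Finite)
    (s : ι → Set α) {m : ℕ} (h : ∀ i ∈ t, (s i).ncard ≤ m) :
    (⋃ i ∈ t, s i).ncard ≤ t.ncard * m := by
  have := ht.toFinset.set_ncard_biUnion_le s
  simp only [Set.Finite.mem_toFinset] at this
  calc _ ≤ _ := this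
    _ ≤ ht.toFinset.card • m := Finset.sum_le_card_nsmul _ _ _ (by simpa using h)
    _ = t.ncard * m := by rw [smul_eq_mul, Set.ncard_eq_toFinset_card t ht]

section

variable {V : Type*} {G : SimpleGraph V}

theorem distLE_symm {n : ℕ} {u v : V} (h : distLE G n u v) : distLE G n v u := by
  obtain ⟨w, hw⟩ := h
  exact ⟨w.reverse, by rwa [Walk.length_reverse]⟩

theorem exists_distLE_of_mem_support {u v x : V} (w : G.Walk u v) (hx : x ∈ w.support) :
    ∃ a b, a + b = w.length ∧ distLE G a u x ∧ distLE G b x v := by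
  classical
  refine ⟨_, _, ?_, ⟨w.takeUntil x hx, le_rfl⟩, ⟨w.dropUntil x hx, le_rfl⟩⟩
  rw [← Walk.length_append, w.take_spec hx]

theorem ncard_ballClosed_le [Finite V] (p : ℕ) (S : Set V) :
    (ballClosed G p S).ncard ≤ S.ncard + (ballOpen G p S).ncard :=
  (Set.ncard_le_ncard fun z hz => (em (z ∈ S)).imp id (⟨hz, ·⟩)).trans (Set.ncard_union_le _ _)

theorem ncard_neighborSet_lt_ncard_ballClosed [Finite V] {T : Set V} {u x : V} {n p : ℕ}
    (hu : u ∈ T) (hux : distLE G n u x) (hnp : n < p) :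
    (G.neighborSet x).ncard < (ballClosed G p T).ncard := by
  obtain ⟨w, hw⟩ := hux
  have hsub : insert x (G.neighborSet x) ⊆ ballClosed G p T := by
    rintro z (rfl | hz)
    · exact ⟨u, hu, w, hw.trans hnp.le⟩
    · exact ⟨u, hu, w.concat ((G.mem_neighborSet x z).mp hz), by rw [Walk.length_concat]; omega⟩
  rw [← Nat.add_one_le_iff, ← Set.ncard_insert_of_notMem (G.notMem_neighborSet_self (a := x))]
  exact Set.ncard_le_ncard hsub

/-- The vertices *linked* to `s` in the paper's sense, for `D = k + ℓ`. -/
def lowDegreeBall (G : SimpleGraph V) (D n : ℕ) (s : V) : Set V :=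
  {v | ∃ w : G.Walk s v, w.length ≤ n ∧ ∀ x ∈ w.support, (G.neighborSet x).ncard < D}

variable {D n : ℕ} {s : V}

theorem ncard_neighborSet_lt_of_mem_lowDegreeBall {v : V} (hv : v ∈ lowDegreeBall G D n s) :
    (G.neighborSet v).ncard < D := by
  obtain ⟨w, -, hw⟩ := hv
  exact hw v w.end_mem_support

theorem lowDegreeBall_zero_subset : lowDegreeBall G D 0 s ⊆ {s} := by
  rintro v ⟨w, hw, -⟩
  exact (w.eq_of_length_eq_zero (Nat.le_zero.mp hw)).symm

theorem lowDegreeBall_succ_subset :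
    lowDegreeBall G D (n + 1) s ⊆ ⋃ u ∈ lowDegreeBall G D n s, insert u (G.neighborSet u) := by
  rintro v ⟨w, hw, hdeg⟩
  induction w using Walk.concatRec with
  | Hnil => exact Set.mem_biUnion ⟨Walk.nil, Nat.zero_le _, hdeg⟩ (Set.mem_insert _ _)
  | Hconcat w h _ =>
    refine Set.mem_biUnion ⟨w, ?_, fun x hx => hdeg x ?_⟩ (Set.mem_insert_of_mem _ h)
    · simpa using hw
    · simp [hx]

theorem ncard_lowDegreeBall_le [Finite V] (G : SimpleGraph V) (D : ℕ) (s : V) :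
    ∀ n, (lowDegreeBall G D n s).ncard ≤ D ^ n
  | 0 => by simpa using Set.ncard_le_ncard (lowDegreeBall_zero_subset (G := G) (D := D) (s := s))
  | n + 1 => calc
      _ ≤ (⋃ u ∈ lowDegreeBall G D n s, insert u (G.neighborSet u)).ncard :=
        Set.ncard_le_ncard lowDegreeBall_succ_subset
      _ ≤ (lowDegreeBall G D n s).ncard * D :=
        Set.ncard_biUnion_le_ncard_mul (Set.toFinite _) _ fun u hu =>
          (Set.ncard_insert_le _ _).trans (ncard_neighborSet_lt_of_mem_lowDegreeBall hu)
      _ ≤ D ^ n * D := Nat.mul_le_mul_right _ (ncard_lowDegreeBall_le G D s n)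
      _ = D ^ (n + 1) := (pow_succ _ _).symm

theorem mem_lowDegreeBall_of_walk [Finite V] {S : Set V} {y : V} {p q : ℕ} (hs : s ∈ S)
    (w : G.Walk s y) (hw : w.length ≤ q) (hpq : q < 2 * p)
    (hS : (ballClosed G p S).ncard ≤ D) (hy : (ballClosed G p {y}).ncard ≤ D) :
    y ∈ lowDegreeBall G D q s := by
  refine ⟨w, hw, fun x hx => ?_⟩
  -- `x` is at distance `< p` from `s` or from `y`, as `w.length < 2 * p`.
  obtain ⟨a, b, hab, hsx, hxy⟩ := exists_distLE_of_mem_support w hx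
  rcases lt_or_ge a p with ha | ha
  · exact (ncard_neighborSet_lt_ncard_ballClosed hs hsx ha).trans_le hS
  · have hb : b < p := by omega
    exact (ncard_neighborSet_lt_ncard_ballClosed (Set.mem_singleton y) (distLE_symm hxy) hb).trans_le
      hy

end

theorem small_secluded_qdom_candidates_bound_general {V : Type*} [Fintype V]
    (G : SimpleGraph V) (p q k ℓ : ℕ) (S : Set V)
    (hpq : q < 2 * p)
    (hdom : ballClosed G q S = Set.univ)
    (hS : S.ncard ≤ k)
    (hnb : (ballOpen G p S).ncard ≤ ℓ) :
    {y : V | (ballClosed G p {y}).ncard ≤ k + ℓ}.ncard ≤ k * (k + ℓ) ^ q := by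
  have hball : (ballClosed G p S).ncard ≤ k + ℓ :=
    (ncard_ballClosed_le p S).trans (add_le_add hS hnb)
  have hlinked : {y : V | (ballClosed G p {y}).ncard ≤ k + ℓ} ⊆
      ⋃ s ∈ S, lowDegreeBall G (k + ℓ) q s := by
    intro y hy
    obtain ⟨s, hs, w, hw⟩ : y ∈ ballClosed G q S := hdom ▸ Set.mem_univ y
    exact Set.mem_biUnion hs (mem_lowDegreeBall_of_walk hs w hw hpq hball hy)
  calc _ ≤ (⋃ s ∈ S, lowDegreeBall G (k + ℓ) q s).ncard := Set.ncard_le_ncard hlinked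
    _ ≤ S.ncard * (k + ℓ) ^ q :=
      Set.ncard_biUnion_le_ncard_mul (Set.toFinite S) _ fun s _ => ncard_lowDegreeBall_le G _ s q
    _ ≤ k * (k + ℓ) ^ q := Nat.mul_le_mul_right _ hS

theorem small_secluded_qdom_candidates_bound {V : Type*} [Fintype V]
    (G : SimpleGraph V) (p q k ℓ : ℕ) (S : Set V)
    (hpq : q < 2 * p) (hkl : 2 ≤ k + ℓ)
    (hdom : ballClosed G q S = Set.univ)
    (hS : S.ncard ≤ k)
    (hnb : (ballOpen G p S).ncard ≤ ℓ) :
    {y : V | (ballClosed G p {y}).ncard ≤ k + ℓ}.ncard ≤ k * (k + ℓ) ^ q :=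
  small_secluded_qdom_candidates_bound_general G p q k ℓ S hpq hdom hS hnb
end

section
/- Let T be a rooted tree and M ⊆ V(T). Let M' = lcac(M) be the LCA-closure of M, obtained by iteratively adding to M the lowest common ancestor of any two vertices of the current set until closed. Then |M'| ≤ 2|M| and for every connected component C of T − M', we have |N_T(C)| ≤ 2. -/
/-- Open neighborhood of a vertex set. -/
def openNbhd {V : Type*} (G : SimpleGraph V) (S : Set V) : Set V :=
  {v | v ∉ S ∧ ∃ u ∈ S, G.Adj u v}

/-- In a tree `T` rooted at `r`, `x` is an ancestor of `y` if `x` lies on the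
(unique) path from `r` to `y`. -/
def IsAncestor {V : Type*} (T : SimpleGraph V) (r x y : V) : Prop :=
  ∃ p : T.Walk r y, p.IsPath ∧ x ∈ p.support

/-- `w` is the lowest common ancestor of `x` and `y` in the tree `T` rooted at `r`. -/
def IsLCA {V : Type*} (T : SimpleGraph V) (r w x y : V) : Prop :=
  IsAncestor T r w x ∧ IsAncestor T r w y ∧
    ∀ w', IsAncestor T r w' x → IsAncestor T r w' y → IsAncestor T r w' w

/-- A set is LCA-closed if it contains the LCA of any two of its elements. -/
def LCAClosed {V : Type*} (T : SimpleGraph V) (r : V) (A : Set V) : Prop :=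
  ∀ x ∈ A, ∀ y ∈ A, ∀ w, IsLCA T r w x y → w ∈ A

/-- The LCA-closure of `M`: the smallest superset of `M` closed under LCAs. -/
def lcac {V : Type*} (T : SimpleGraph V) (r : V) (M : Set V) : Set V :=
  ⋂₀ {A : Set V | M ⊆ A ∧ LCAClosed T r A}

/-!
Adding one vertex `x` to an LCA-closed set `A` creates at most one new LCA besides `x`: the
deepest ancestor `d` of `x` that is also an ancestor of some vertex of `A`. Indeed `insert d A`
is LCA-closed, since the LCA of `d` and `m ∈ A` is either `d` or the LCA of `m` with a vertex of
`A` below `d`; and the LCA of `x` with any `m ∈ A` is the LCA of `d` and `m`. Induction on `M`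
gives `|lcac M| ≤ 2 |M|`.

Let `C` be a component of `T - A`, `A` LCA-closed. Two neighbours of `C` are joined by a walk
whose inner vertices lie in `C`. The LCA of the two neighbours lies on every walk between them
and belongs to `A`, so it is one of them: the neighbours are pairwise comparable for the
ancestor order. A neighbour lying between two others would likewise lie on such a walk. A chain
without middle elements has at most two elements.
-/

open Set SimpleGraph Walk

theorem Set.ncard_le_two_of_total_of_no_middle {α : Type*} {s : Set α} (R : α → α → Prop)
    (hs : s.Finite) (htotal : ∀ x ∈ s, ∀ y ∈ s, R x y ∨ R y x)
    (hmiddle : ∀ x ∈ s, ∀ y ∈ s, ∀ z ∈ s, R x y → R y z → y = x ∨ y = z) :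
    s.ncard ≤ 2 := by
  by_contra! h
  obtain ⟨a, ha, b, hb, c, hc, hab, hac, hbc⟩ := (two_lt_ncard hs).1 h
  rcases htotal a ha b hb with h₁ | h₁ <;> rcases htotal b hb c hc with h₂ | h₂ <;>
    rcases htotal a ha c hc with h₃ | h₃ <;>
    -- each orientation of the three pairs contains a path `x → y → z` through all three points
    grind

namespace SimpleGraph.Walk

variable {V : Type*} {G : SimpleGraph V} {u v w : V}

theorem IsPath.append {p : G.Walk u v} {q : G.Walk v w} (hp : p.IsPath) (hq : q.IsPath)
    (h : ∀ x ∈ p.support, x ∈ q.support → x = v) : (p.append q).IsPath := by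
  have hq' := hq.support_nodup
  rw [← cons_tail_support q, List.nodup_cons] at hq'
  rw [isPath_def, support_append, List.nodup_append]
  refine ⟨hp.support_nodup, hq'.2, ?_⟩
  rintro x hx _ hy rfl
  exact hq'.1 (h x hx (List.mem_of_mem_tail hy) ▸ hy)

end SimpleGraph.Walk

theorem SimpleGraph.ConnectedComponent.mem_supp_of_mem_support {V : Type*} {G : SimpleGraph V}
    (C : G.ConnectedComponent) {u v w : V} (hu : u ∈ C.supp) (p : G.Walk u v)
    (hw : w ∈ p.support) : w ∈ C.supp := by
  obtain ⟨q, -, -⟩ := mem_support_iff_exists_append.1 hw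
  exact (ConnectedComponent.sound ⟨q⟩).symm.trans hu

namespace SimpleGraph.IsTree

variable {V : Type*} {T : SimpleGraph V} {r v w x y z : V}

noncomputable def rootPath (hT : T.IsTree) (r x : V) : T.Walk r x :=
  (hT.existsUnique_path r x).choose

theorem isPath_rootPath (hT : T.IsTree) (r x : V) : (hT.rootPath r x).IsPath :=
  (hT.existsUnique_path r x).choose_spec.1

theorem eq_of_isPath (hT : T.IsTree) {p q : T.Walk x y} (hp : p.IsPath) (hq : q.IsPath) :
    p = q :=
  (hT.existsUnique_path x y).unique hp hq

theorem mem_support_of_mem_support_of_isPath (hT : T.IsTree) {p q : T.Walk x y} (hq : q.IsPath)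
    (hz : z ∈ q.support) : z ∈ p.support := by
  classical
  exact p.support_bypass_subset_support (hT.eq_of_isPath p.bypass_isPath hq ▸ hz)

theorem isAncestor_iff_mem_support_rootPath (hT : T.IsTree) :
    IsAncestor T r x y ↔ x ∈ (hT.rootPath r y).support :=
  ⟨fun ⟨_, hp, hx⟩ => hT.eq_of_isPath hp (hT.isPath_rootPath r y) ▸ hx,
    fun h => ⟨_, hT.isPath_rootPath r y, h⟩⟩

theorem isAncestor_refl (hT : T.IsTree) (r x : V) : IsAncestor T r x x :=
  ⟨_, hT.isPath_rootPath r x, end_mem_support _⟩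

theorem isAncestor_root (hT : T.IsTree) (r x : V) : IsAncestor T r r x :=
  ⟨_, hT.isPath_rootPath r x, start_mem_support _⟩

section DecidableEq

variable [DecidableEq V]

theorem takeUntil_rootPath (hT : T.IsTree) (h : x ∈ (hT.rootPath r y).support) :
    (hT.rootPath r y).takeUntil x h = hT.rootPath r x :=
  hT.eq_of_isPath ((hT.isPath_rootPath r y).takeUntil h) (hT.isPath_rootPath r x)

theorem length_rootPath_add_length_dropUntil (hT : T.IsTree)
    (h : x ∈ (hT.rootPath r y).support) :
    (hT.rootPath r x).length + ((hT.rootPath r y).dropUntil x h).length =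
      (hT.rootPath r y).length := by
  rw [← hT.takeUntil_rootPath h, ← length_append, take_spec]

theorem isAncestor_of_mem_support_dropUntil (hT : T.IsTree) (h : w ∈ (hT.rootPath r x).support)
    (hv : v ∈ ((hT.rootPath r x).dropUntil w h).support) : IsAncestor T r w v := by
  set q := (hT.rootPath r x).dropUntil w h
  have hsplit : (((hT.rootPath r x).takeUntil w h).append (q.takeUntil v hv)).append
      (q.dropUntil v hv) = hT.rootPath r x := by
    rw [← append_assoc, take_spec, take_spec]
  have hpath := hT.isPath_rootPath r x
  rw [← hsplit] at hpath
  exact ⟨_, hpath.of_append_left, (mem_support_append_iff _ _).2 (Or.inl (end_mem_support _))⟩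

end DecidableEq

theorem isAncestor_trans (hT : T.IsTree) (hxy : IsAncestor T r x y) (hyz : IsAncestor T r y z) :
    IsAncestor T r x z := by
  classical
  rw [hT.isAncestor_iff_mem_support_rootPath] at *
  rw [← hT.takeUntil_rootPath hyz] at hxy
  exact support_takeUntil_subset_support _ _ hxy

theorem isAncestor_total (hT : T.IsTree) (hx : IsAncestor T r x z) (hy : IsAncestor T r y z) :
    IsAncestor T r x y ∨ IsAncestor T r y x := by
  classical
  rw [hT.isAncestor_iff_mem_support_rootPath] at hx hy
  have hy' : y ∈ (((hT.rootPath r z).takeUntil x hx).append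
      ((hT.rootPath r z).dropUntil x hx)).support := by
    rwa [take_spec]
  rcases (mem_support_append_iff _ _).1 hy' with hy' | hy'
  · rw [hT.takeUntil_rootPath] at hy'
    exact Or.inr (hT.isAncestor_iff_mem_support_rootPath.2 hy')
  · exact Or.inl (hT.isAncestor_of_mem_support_dropUntil hx hy')

theorem length_rootPath_le (hT : T.IsTree) (h : IsAncestor T r x y) :
    (hT.rootPath r x).length ≤ (hT.rootPath r y).length := by
  classical
  rw [hT.isAncestor_iff_mem_support_rootPath] at h
  have := hT.length_rootPath_add_length_dropUntil h
  omega

theorem eq_of_isAncestor_of_length_le (hT : T.IsTree) (h : IsAncestor T r x y)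
    (hlen : (hT.rootPath r y).length ≤ (hT.rootPath r x).length) : x = y := by
  classical
  rw [hT.isAncestor_iff_mem_support_rootPath] at h
  have := hT.length_rootPath_add_length_dropUntil h
  exact eq_of_length_eq_zero (p := (hT.rootPath r y).dropUntil x h) (by omega)

theorem isAncestor_antisymm (hT : T.IsTree) (hxy : IsAncestor T r x y)
    (hyx : IsAncestor T r y x) : x = y :=
  hT.eq_of_isAncestor_of_length_le hxy (hT.length_rootPath_le hyx)

theorem exists_isAncestor_greatest (hT : T.IsTree) {S : Set V}
    (hS : ∀ s ∈ S, IsAncestor T r s x) (hne : S.Nonempty) :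
    ∃ d ∈ S, ∀ s ∈ S, IsAncestor T r s d := by
  have hfin : S.Finite := (hT.rootPath r x).support.finite_toSet.subset fun s hs =>
    hT.isAncestor_iff_mem_support_rootPath.1 (hS s hs)
  obtain ⟨d, hd, hmax⟩ := exists_max_image S (fun v => (hT.rootPath r v).length) hfin hne
  refine ⟨d, hd, fun s hs => ?_⟩
  rcases hT.isAncestor_total (hS s hs) (hS d hd) with h | h
  · exact h
  · rw [hT.eq_of_isAncestor_of_length_le h (hmax s hs)]
    exact hT.isAncestor_refl r s

theorem exists_isLCA (hT : T.IsTree) (r x y : V) : ∃ w, IsLCA T r w x y := by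
  obtain ⟨w, ⟨hwx, hwy⟩, hmax⟩ := hT.exists_isAncestor_greatest
    (S := {w | IsAncestor T r w x ∧ IsAncestor T r w y}) (fun _ h => h.1)
    ⟨r, hT.isAncestor_root r x, hT.isAncestor_root r y⟩
  exact ⟨w, hwx, hwy, fun w' h₁ h₂ => hmax w' ⟨h₁, h₂⟩⟩

theorem eq_of_isLCA_of_isAncestor (hT : T.IsTree) (h : IsLCA T r w x y)
    (hxy : IsAncestor T r x y) : w = x :=
  hT.isAncestor_antisymm h.1 (h.2.2 x (hT.isAncestor_refl r x) hxy)

theorem mem_support_of_isAncestor (hT : T.IsTree) (hxy : IsAncestor T r x y)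
    (hyz : IsAncestor T r y z) (p : T.Walk x z) : y ∈ p.support := by
  classical
  have hxz := hT.isAncestor_iff_mem_support_rootPath.1 (hT.isAncestor_trans hxy hyz)
  refine hT.mem_support_of_mem_support_of_isPath ((hT.isPath_rootPath r z).dropUntil hxz) ?_
  have hy : y ∈ (((hT.rootPath r z).takeUntil x hxz).append
      ((hT.rootPath r z).dropUntil x hxz)).support := by
    rw [take_spec]
    exact hT.isAncestor_iff_mem_support_rootPath.1 hyz
  rcases (mem_support_append_iff _ _).1 hy with hy | hy
  · rw [hT.takeUntil_rootPath] at hy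
    rw [← hT.isAncestor_antisymm hxy (hT.isAncestor_iff_mem_support_rootPath.2 hy)]
    exact start_mem_support _
  · exact hy

theorem mem_support_of_isLCA (hT : T.IsTree) (h : IsLCA T r w x y) (p : T.Walk x y) :
    w ∈ p.support := by
  classical
  obtain ⟨hwx, hwy, hmax⟩ := h
  rw [hT.isAncestor_iff_mem_support_rootPath] at hwx hwy
  have hq : (((hT.rootPath r x).dropUntil w hwx).reverse.append
      ((hT.rootPath r y).dropUntil w hwy)).IsPath := by
    refine ((hT.isPath_rootPath r x).dropUntil hwx).reverse.append
      ((hT.isPath_rootPath r y).dropUntil hwy) fun z hz₁ hz₂ => ?_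
    rw [support_reverse, List.mem_reverse] at hz₁
    refine hT.isAncestor_antisymm (hmax z ?_ ?_) (hT.isAncestor_of_mem_support_dropUntil hwx hz₁)
    · exact hT.isAncestor_iff_mem_support_rootPath.2 (support_dropUntil_subset_support _ _ hz₁)
    · exact hT.isAncestor_iff_mem_support_rootPath.2 (support_dropUntil_subset_support _ _ hz₂)
  exact hT.mem_support_of_mem_support_of_isPath hq
    ((mem_support_append_iff _ _).2 (Or.inr (start_mem_support _)))

end SimpleGraph.IsTree

section LCAClosure

variable {V : Type*} {T : SimpleGraph V} {r d m₀ w x y : V} {A M : Set V}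

theorem IsLCA.symm (h : IsLCA T r w x y) : IsLCA T r w y x :=
  ⟨h.2.1, h.1, fun w' h₁ h₂ => h.2.2 w' h₂ h₁⟩

theorem LCAClosed.insert_of_forall_isLCA (hT : T.IsTree) (hA : LCAClosed T r A)
    (hx : ∀ m ∈ A, ∀ w, IsLCA T r w x m → w ∈ insert x A) :
    LCAClosed T r (insert x A) := by
  rintro u (rfl | hu) v (rfl | hv) w hw
  · rw [hT.eq_of_isLCA_of_isAncestor hw (hT.isAncestor_refl r _)]
    exact mem_insert _ A
  · exact hx v hv w hw
  · exact hx u hu w hw.symm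
  · exact mem_insert_of_mem x (hA u hu v hv w hw)

theorem LCAClosed.insert_of_isAncestor (hT : T.IsTree) (hA : LCAClosed T r A) (hm₀ : m₀ ∈ A)
    (hd : IsAncestor T r d m₀) : LCAClosed T r (insert d A) := by
  refine hA.insert_of_forall_isLCA hT fun m hm w hw => ?_
  obtain ⟨c, hc⟩ := hT.exists_isLCA r m₀ m
  have hwc : IsAncestor T r w c := hc.2.2 w (hT.isAncestor_trans hw.1 hd) hw.2.1
  rcases hT.isAncestor_total hc.1 hd with hcd | hdc
  · rw [hT.isAncestor_antisymm hwc (hw.2.2 c hcd hc.2.1)]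
    exact mem_insert_of_mem d (hA m₀ hm₀ m hm c hc)
  · have hdm : IsAncestor T r d m := hT.isAncestor_trans hdc hc.2.1
    rw [hT.isAncestor_antisymm hw.1 (hw.2.2 d (hT.isAncestor_refl r d) hdm)]
    exact mem_insert d A

theorem LCAClosed.exists_lcaClosed_insert_insert (hT : T.IsTree) (hA : LCAClosed T r A)
    (x : V) : ∃ d, LCAClosed T r (insert x (insert d A)) := by
  rcases A.eq_empty_or_nonempty with rfl | ⟨m₀, hm₀⟩
  · refine ⟨x, ?_⟩
    rw [insert_eq_of_mem (mem_insert x ∅)]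
    exact hA.insert_of_forall_isLCA hT (by simp)
  obtain ⟨d, ⟨hdx, m₁, hm₁, hdm₁⟩, hmax⟩ := hT.exists_isAncestor_greatest
    (S := {v | IsAncestor T r v x ∧ ∃ m ∈ A, IsAncestor T r v m}) (fun _ h => h.1)
    ⟨r, hT.isAncestor_root r x, m₀, hm₀, hT.isAncestor_root r m₀⟩
  have hdA := hA.insert_of_isAncestor hT hm₁ hdm₁
  refine ⟨d, hdA.insert_of_forall_isLCA hT ?_⟩
  rintro m (rfl | hm) w hw
  · rw [hT.eq_of_isLCA_of_isAncestor hw.symm hdx]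
    exact mem_insert_of_mem x (mem_insert m A)
  · have hwd : IsAncestor T r w d := hmax w ⟨hw.1, m, hm, hw.2.1⟩
    have hw' : IsLCA T r w d m :=
      ⟨hwd, hw.2.1, fun w' h₁ h₂ => hw.2.2 w' (hT.isAncestor_trans h₁ hdx) h₂⟩
    exact mem_insert_of_mem x (hdA d (mem_insert d A) m (mem_insert_of_mem d hm) w hw')

theorem subset_lcac (T : SimpleGraph V) (r : V) (M : Set V) : M ⊆ lcac T r M :=
  fun _ hv _ hA => hA.1 hv

theorem lcaClosed_lcac : LCAClosed T r (lcac T r M) :=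
  fun x hx y hy w hw A hA => hA.2 x (hx A hA) y (hy A hA) w hw

theorem lcac_subset (hMA : M ⊆ A) (hA : LCAClosed T r A) : lcac T r M ⊆ A :=
  sInter_subset_of_mem ⟨hMA, hA⟩

theorem lcac_empty : lcac T r ∅ = ∅ :=
  subset_empty_iff.1 (lcac_subset (empty_subset _) fun _ hx => hx.elim)

theorem ncard_lcac_insert_le [Finite V] (hT : T.IsTree) (M : Set V) (x : V) :
    (lcac T r (insert x M)).ncard ≤ (lcac T r M).ncard + 2 := by
  obtain ⟨d, hd⟩ := (lcaClosed_lcac (M := M)).exists_lcaClosed_insert_insert hT x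
  have hsub : lcac T r (insert x M) ⊆ insert x (insert d (lcac T r M)) :=
    lcac_subset (insert_subset_insert ((subset_lcac T r M).trans (subset_insert d _))) hd
  calc (lcac T r (insert x M)).ncard
      ≤ (insert x (insert d (lcac T r M))).ncard := ncard_le_ncard hsub
    _ ≤ (insert d (lcac T r M)).ncard + 1 := ncard_insert_le _ _
    _ ≤ (lcac T r M).ncard + 2 := by linarith [ncard_insert_le d (lcac T r M)]

theorem ncard_lcac_le_two_mul [Finite V] (hT : T.IsTree) (M : Set V) :
    (lcac T r M).ncard ≤ 2 * M.ncard := by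
  induction M, M.toFinite using Set.Finite.induction_on with
  | empty => simp [lcac_empty]
  | @insert x M hx _ ih =>
    rw [ncard_insert_of_notMem hx]
    linarith [ncard_lcac_insert_le (r := r) hT M x]

end LCAClosure

section Component

variable {V : Type*} {G : SimpleGraph V} {A : Set V} {a b : V}

theorem openNbhd_supp_subset (C : (G.induce Aᶜ).ConnectedComponent) :
    openNbhd G (Subtype.val '' C.supp) ⊆ A := by
  rintro v ⟨hvS, _, ⟨u, hu, rfl⟩, huv⟩
  by_contra hv
  have huv' : (G.induce Aᶜ).Adj u ⟨v, hv⟩ := huv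
  exact hvS ⟨⟨v, hv⟩, C.mem_supp_of_adj_mem_supp hu huv', rfl⟩

theorem exists_walk_of_mem_openNbhd (C : (G.induce Aᶜ).ConnectedComponent)
    (ha : a ∈ openNbhd G (Subtype.val '' C.supp))
    (hb : b ∈ openNbhd G (Subtype.val '' C.supp)) :
    ∃ p : G.Walk a b, ∀ z ∈ p.support, z = a ∨ z = b ∨ z ∈ Subtype.val '' C.supp := by
  obtain ⟨-, _, ⟨u, hu, rfl⟩, hua⟩ := ha
  obtain ⟨-, _, ⟨v, hv, rfl⟩, hvb⟩ := hb
  obtain ⟨q⟩ := C.reachable_of_mem_supp hu hv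
  -- `Walk.map` produces the endpoints `(Embedding.induce Aᶜ).toHom u`, which are `↑u` only up
  -- to defeq; restating the adjacencies in that form lets the support lemmas below rewrite.
  have hua' : G.Adj ((Embedding.induce (G := G) Aᶜ).toHom u) a := hua
  have hvb' : G.Adj ((Embedding.induce (G := G) Aᶜ).toHom v) b := hvb
  refine ⟨((q.map (Embedding.induce Aᶜ).toHom).cons hua'.symm).concat hvb', fun z hz => ?_⟩
  rw [support_concat, support_cons, Walk.support_map, List.mem_append, List.mem_cons,
    List.mem_map, List.mem_singleton] at hz
  rcases hz with (rfl | ⟨z, hz, rfl⟩) | rfl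
  · exact Or.inl rfl
  · exact Or.inr (Or.inr ⟨z, C.mem_supp_of_mem_support hu q hz, rfl⟩)
  · exact Or.inr (Or.inl rfl)

end Component

theorem LCAClosed.ncard_openNbhd_le_two {V : Type*} [Finite V] {T : SimpleGraph V} {r : V}
    {A : Set V} (hT : T.IsTree) (hA : LCAClosed T r A) (C : (T.induce Aᶜ).ConnectedComponent) :
    (openNbhd T (Subtype.val '' C.supp)).ncard ≤ 2 := by
  set N := openNbhd T (Subtype.val '' C.supp)
  have hNA : N ⊆ A := openNbhd_supp_subset C
  have hmem : ∀ a ∈ N, ∀ b ∈ N, ∀ v ∈ A,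
      (∀ p : T.Walk a b, v ∈ p.support) → v = a ∨ v = b := by
    intro a ha b hb v hv hvp
    obtain ⟨p, hp⟩ := exists_walk_of_mem_openNbhd C ha hb
    rcases hp v (hvp p) with h | h | ⟨u, -, rfl⟩
    · exact Or.inl h
    · exact Or.inr h
    · exact absurd hv u.2
  refine Set.ncard_le_two_of_total_of_no_middle (IsAncestor T r) (toFinite _) ?_ ?_
  · intro a ha b hb
    obtain ⟨w, hw⟩ := hT.exists_isLCA r a b
    rcases hmem a ha b hb w (hA a (hNA ha) b (hNA hb) w hw) (hT.mem_support_of_isLCA hw) with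
      rfl | rfl
    · exact Or.inl hw.2.1
    · exact Or.inr hw.1
  · intro a ha b hb c hc hab hbc
    exact hmem a ha c hc b (hNA hb) (hT.mem_support_of_isAncestor hab hbc)

theorem lca_closure_bound {V : Type*} [Fintype V] (T : SimpleGraph V) (r : V)
    (htree : T.IsTree) (M : Set V) :
    (lcac T r M).ncard ≤ 2 * M.ncard ∧
      ∀ C : (T.induce (lcac T r M)ᶜ).ConnectedComponent,
        (openNbhd T (Subtype.val '' C.supp)).ncard ≤ 2 :=
  ⟨ncard_lcac_le_two_mul htree M, fun C => lcaClosed_lcac.ncard_openNbhd_le_two htree C⟩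
end

section
/- Let G be a graph on vertex set V partitioned into nonempty sets V_1, …, V_k, each of size at least 2, with no edge inside any V_i. Construct G' from G by: (a) adding all edges inside each V_i (making each V_i a clique), (b) adding a new vertex u adjacent to all of V, and (c) adding a set L of |V| − k + k + 1 new vertices all adjacent to u. Then G has an independent set containing exactly one vertex from each V_i if and only if G' has a set S ⊆ V(G') with |S| ≤ |V| − k and |N_{G'}(S)| ≤ k + 1 such that G' − S is acyclic. -/
/-- A set of pairwise non-adjacent vertices. -/
def IsIndepSet {V : Type*} (G : SimpleGraph V) (S : Set V) : Prop :=
  ∀ a ∈ S, ∀ b ∈ S, ¬ G.Adj a b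

/-- The graph `G'` of the reduction: the parts `P i` are turned into cliques, a new
vertex `u` (encoded `Sum.inr none`) is joined to all original vertices, and the
vertices of `L` (encoded `Sum.inr (some j)`) are joined to `u`. -/
def reductionGraph {V : Type*} (G : SimpleGraph V) {k m : ℕ} (P : Fin k → Set V) :
    SimpleGraph (V ⊕ Option (Fin m)) :=
  SimpleGraph.fromRel (fun a b =>
    match a, b with
    | Sum.inl a, Sum.inl b => G.Adj a b ∨ ∃ i, a ∈ P i ∧ b ∈ P i ∧ a ≠ b
    | Sum.inl _, Sum.inr none => True
    | Sum.inr none, Sum.inr (some _) => True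
    | _, _ => False)

/-!
In `G'` the new vertex `u` is adjacent to every other vertex. If `I` is a multicolored
independent set, deleting `V ∖ I` leaves only edges at `u` (no two vertices of `I` share a
clique `V_i` or an edge of `G`), so `G' - (V ∖ I)` is a star, and `N(V ∖ I) ⊆ I ∪ {u}`.
Conversely, `u` cannot belong to a solution `S`: its neighbourhood would then be the whole
complement of `S`, which the |V| - k + k + 1 pendant vertices make too large. Since every
survivor of `V` is adjacent to `u`, an edge between two of them would close a triangle; so the
survivors are independent in `G` and meet each clique `V_i` at most once, while there are at
least `k` of them.
-/

open scoped Function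

namespace SimpleGraph

variable {V : Type*} {G : SimpleGraph V}

lemma isAcyclic_of_forall_adj_eq_or_eq (r : V) (h : ∀ a b, G.Adj a b → a = r ∨ b = r) :
    G.IsAcyclic :=
  (isAcyclic_starGraph r).anti fun a b hab => starGraph_adj.2 ⟨hab.ne, h a b hab⟩

lemma IsAcyclic.not_adj_of_adj_of_adj (hG : G.IsAcyclic) {a b c : V} (hac : G.Adj a c)
    (hbc : G.Adj b c) : ¬ G.Adj a b := by
  classical
  exact fun hab => hG.cliqueFree le_rfl {a, b, c} (is3Clique_triple_iff.2 ⟨hab, hac, hbc⟩)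

lemma IsUniversal.compl_subset_openNbhd {r : V} {S : Set V} (hr : G.IsUniversal r)
    (hrS : r ∈ S) : Sᶜ ⊆ openNbhd G S := fun _ hv =>
  ⟨hv, r, hrS, hr fun h => hv (h ▸ hrS)⟩

end SimpleGraph

section Partition

variable {α ι : Type*} [Finite α] [Fintype ι] {P : ι → Set α}

lemma Set.ncard_eq_sum_ncard_inter (hdisj : Pairwise (Disjoint on P))
    (hcover : ⋃ i, P i = Set.univ) (I : Set α) : I.ncard = ∑ i, (I ∩ P i).ncard := by
  rw [← finsum_eq_sum_of_fintype, ← Set.ncard_iUnion_of_finite (fun _ => Set.toFinite _)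
    fun i j hij => (hdisj hij).mono Set.inter_subset_right Set.inter_subset_right,
    ← Set.inter_iUnion, hcover, Set.inter_univ]

lemma Set.ncard_inter_eq_one_of_card_le (hdisj : Pairwise (Disjoint on P))
    (hcover : ⋃ i, P i = Set.univ) {I : Set α} (hle : ∀ i, (I ∩ P i).ncard ≤ 1)
    (hcard : Fintype.card ι ≤ I.ncard) (i : ι) : (I ∩ P i).ncard = 1 := by
  refine (hle i).antisymm (Nat.one_le_iff_ne_zero.2 fun h0 => hcard.not_gt ?_)
  rw [Set.ncard_eq_sum_ncard_inter hdisj hcover, Fintype.card_eq_sum_ones]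
  exact Finset.sum_lt_sum (fun j _ => hle j) ⟨i, Finset.mem_univ i, by omega⟩

lemma Fintype.card_le_nat_card_of_pairwise_disjoint (hne : ∀ i, (P i).Nonempty)
    (hdisj : Pairwise (Disjoint on P)) : Fintype.card ι ≤ Nat.card α := by
  have := Fintype.ofFinite α
  rw [Nat.card_eq_fintype_card]
  refine Fintype.card_le_of_injective (fun i => (hne i).some) fun i j hij =>
    Set.PairwiseDisjoint.elim_set (hdisj.set_pairwise Set.univ) trivial trivial _ (hne i).some_mem
      (by simpa only [hij] using (hne j).some_mem)

end Partition

section ReductionGraph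

variable {V : Type*} {G : SimpleGraph V} {k m : ℕ} {P : Fin k → Set V}

lemma reductionGraph_adj_inl_inl {a b : V} :
    (reductionGraph (m := m) G P).Adj (.inl a) (.inl b) ↔
      a ≠ b ∧ (G.Adj a b ∨ ∃ i, a ∈ P i ∧ b ∈ P i) := by
  simp only [reductionGraph, SimpleGraph.fromRel_adj, ne_eq, Sum.inl.injEq]
  constructor
  · rintro ⟨hab, (h | ⟨i, ha, hb, -⟩) | h | ⟨i, hb, ha, -⟩⟩
    exacts [⟨hab, .inl h⟩, ⟨hab, .inr ⟨i, ha, hb⟩⟩, ⟨hab, .inl h.symm⟩, ⟨hab, .inr ⟨i, ha, hb⟩⟩]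
  · rintro ⟨hab, h | ⟨i, ha, hb⟩⟩
    exacts [⟨hab, .inl (.inl h)⟩, ⟨hab, .inl (.inr ⟨i, ha, hb, hab⟩)⟩]

lemma isUniversal_reductionGraph_none :
    (reductionGraph (m := m) G P).IsUniversal (.inr none) := by
  rintro (a | _ | j) h
  · simp [reductionGraph]
  · exact absurd rfl h
  · simp [reductionGraph]

lemma reductionGraph_adj_inl_inl_or_eq_none {x y : V ⊕ Option (Fin m)}
    (h : (reductionGraph G P).Adj x y) :
    (∃ a b, x = .inl a ∧ y = .inl b) ∨ x = .inr none ∨ y = .inr none := by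
  rcases x with a | _ | i <;> rcases y with b | _ | j <;> simp_all [reductionGraph]

lemma openNbhd_reductionGraph_inl_image_compl_subset (I : Set V) :
    openNbhd (reductionGraph (m := m) G P) (Sum.inl '' Iᶜ) ⊆
      insert (.inr none) (Sum.inl '' I) := by
  rintro (b | _ | j) ⟨hb, _, ⟨a, -, rfl⟩, hab⟩
  · exact .inr ⟨b, by simpa using hb, rfl⟩
  · exact .inl rfl
  · simp [reductionGraph] at hab

lemma isAcyclic_reductionGraph_induce_compl_inl_image {I : Set V} (hI : IsIndepSet G I)
    (hP : ∀ i, (I ∩ P i).Subsingleton) :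
    ((reductionGraph (m := m) G P).induce (Sum.inl '' Iᶜ)ᶜ).IsAcyclic := by
  refine SimpleGraph.isAcyclic_of_forall_adj_eq_or_eq ⟨.inr none, by simp⟩
    fun ⟨x, hx⟩ ⟨y, hy⟩ hxy => ?_
  rcases reductionGraph_adj_inl_inl_or_eq_none hxy with ⟨a, b, rfl, rfl⟩ | h | h
  · simp only [Set.mem_compl_iff, Sum.inl_injective.mem_set_image, not_not] at hx hy
    obtain ⟨hab, h | ⟨i, ha, hb⟩⟩ := reductionGraph_adj_inl_inl.1 hxy
    exacts [absurd h (hI a hx b hy), absurd (hP i ⟨hx, ha⟩ ⟨hy, hb⟩) hab]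
  · exact .inl (Subtype.ext h)
  · exact .inr (Subtype.ext h)

lemma not_adj_inl_inl_of_isAcyclic_induce {S : Set (V ⊕ Option (Fin m))}
    (hS : ((reductionGraph G P).induce Sᶜ).IsAcyclic) (hu : .inr none ∉ S) ⦃a b : V⦄
    (ha : .inl a ∉ S) (hb : .inl b ∉ S) :
    ¬ (reductionGraph (m := m) G P).Adj (.inl a) (.inl b) :=
  hS.not_adj_of_adj_of_adj (a := ⟨_, ha⟩) (b := ⟨_, hb⟩) (c := ⟨_, hu⟩)
    (isUniversal_reductionGraph_none (G := G) (P := P) Sum.inr_ne_inl).symm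
    (isUniversal_reductionGraph_none (G := G) (P := P) Sum.inr_ne_inl).symm

variable [Fintype V]

lemma exists_secluded_fvs_of_multicolored_indepSet
    (hdisj : ∀ i j, i ≠ j → Disjoint (P i) (P j)) (hcover : ⋃ i, P i = Set.univ) {I : Set V}
    (hI : IsIndepSet G I) (hP : ∀ i, (I ∩ P i).ncard = 1) :
    ∃ S : Set (V ⊕ Option (Fin (Fintype.card V - k + k + 1))),
      S.ncard ≤ Fintype.card V - k ∧
      (openNbhd (reductionGraph G P) S).ncard ≤ k + 1 ∧
      ((reductionGraph G P).induce Sᶜ).IsAcyclic := by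
  have hIk : I.ncard = k := by simp [Set.ncard_eq_sum_ncard_inter hdisj hcover I, hP]
  refine ⟨Sum.inl '' Iᶜ, ?_, ?_, isAcyclic_reductionGraph_induce_compl_inl_image hI
    fun i => Set.ncard_le_one_iff_subsingleton.1 (hP i).le⟩
  · rw [Set.ncard_image_of_injective _ Sum.inl_injective, Set.ncard_compl, hIk,
      Nat.card_eq_fintype_card]
  · calc _ ≤ (insert (.inr none) (Sum.inl '' I)).ncard :=
          Set.ncard_le_ncard (openNbhd_reductionGraph_inl_image_compl_subset I)
      _ ≤ (Sum.inl '' I).ncard + 1 := Set.ncard_insert_le _ _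
      _ = k + 1 := by rw [Set.ncard_image_of_injective _ Sum.inl_injective, hIk]

lemma none_notMem_of_ncard_le {S : Set (V ⊕ Option (Fin (Fintype.card V - k + k + 1)))}
    (hS : S.ncard ≤ Fintype.card V - k) (hN : (openNbhd (reductionGraph G P) S).ncard ≤ k + 1) :
    .inr none ∉ S := fun hu => by
  have hcompl := Set.ncard_le_ncard
    ((isUniversal_reductionGraph_none (G := G) (P := P)).compl_subset_openNbhd hu)
  have hcard := Set.ncard_add_ncard_compl S
  simp only [Nat.card_eq_fintype_card, Fintype.card_sum, Fintype.card_option,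
    Fintype.card_fin] at hcard
  omega

lemma exists_multicolored_indepSet_of_secluded_fvs (hnonempty : ∀ i, (P i).Nonempty)
    (hdisj : ∀ i j, i ≠ j → Disjoint (P i) (P j)) (hcover : ⋃ i, P i = Set.univ)
    {S : Set (V ⊕ Option (Fin (Fintype.card V - k + k + 1)))}
    (hS : S.ncard ≤ Fintype.card V - k) (hN : (openNbhd (reductionGraph G P) S).ncard ≤ k + 1)
    (hA : ((reductionGraph G P).induce Sᶜ).IsAcyclic) :
    ∃ I : Set V, IsIndepSet G I ∧ ∀ i, (I ∩ P i).ncard = 1 := by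
  have hI := not_adj_inl_inl_of_isAcyclic_induce hA (none_notMem_of_ncard_le hS hN)
  refine ⟨Sum.inl ⁻¹' Sᶜ, fun a ha b hb hab => hI ha hb (reductionGraph_adj_inl_inl.2
    ⟨hab.ne, .inl hab⟩), Set.ncard_inter_eq_one_of_card_le hdisj hcover (fun i => ?_) ?_⟩
  · exact Set.ncard_le_one_iff_subsingleton.2 fun a ha b hb => by_contra fun hab =>
      hI ha.1 hb.1 (reductionGraph_adj_inl_inl.2 ⟨hab, .inr ⟨i, ha.2, hb.2⟩⟩)
  · have hkn := Fintype.card_le_nat_card_of_pairwise_disjoint hnonempty hdisj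
    have hdel : (Sum.inl ⁻¹' S : Set V).ncard ≤ S.ncard :=
      Set.ncard_le_ncard_of_injOn Sum.inl (fun _ h => h) Sum.inl_injective.injOn
    have hcard := Set.ncard_add_ncard_compl (Sum.inl ⁻¹' S : Set V)
    rw [Fintype.card_fin, Nat.card_eq_fintype_card] at hkn
    rw [Nat.card_eq_fintype_card] at hcard
    rw [Set.preimage_compl, Fintype.card_fin]
    omega

end ReductionGraph

theorem small_secluded_fvs_W1_reduction_general {V : Type*} [Fintype V] (G : SimpleGraph V)
    (k : ℕ) (P : Fin k → Set V)
    (hnonempty : ∀ i, (P i).Nonempty)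
    (hdisj : ∀ i j, i ≠ j → Disjoint (P i) (P j))
    (hcover : (⋃ i, P i) = Set.univ) :
    (∃ I : Set V, IsIndepSet G I ∧ ∀ i, (I ∩ P i).ncard = 1) ↔
      (∃ S : Set (V ⊕ Option (Fin (Fintype.card V - k + k + 1))),
        S.ncard ≤ Fintype.card V - k ∧
        (openNbhd (reductionGraph G P) S).ncard ≤ k + 1 ∧
        ((reductionGraph G P).induce Sᶜ).IsAcyclic) :=
  ⟨fun ⟨_, hI, hP⟩ => exists_secluded_fvs_of_multicolored_indepSet hdisj hcover hI hP,
    fun ⟨_, hS, hN, hA⟩ => exists_multicolored_indepSet_of_secluded_fvs hnonempty hdisj hcover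
      hS hN hA⟩

theorem small_secluded_fvs_W1_reduction {V : Type*} [Fintype V] (G : SimpleGraph V)
    (k : ℕ) (P : Fin k → Set V)
    (hnonempty : ∀ i, (P i).Nonempty)
    (hsize : ∀ i, 2 ≤ (P i).ncard)
    (hdisj : ∀ i j, i ≠ j → Disjoint (P i) (P j))
    (hcover : (⋃ i, P i) = Set.univ)
    (hnoedge : ∀ i, ∀ a ∈ P i, ∀ b ∈ P i, ¬ G.Adj a b) :
    (∃ I : Set V, IsIndepSet G I ∧ ∀ i, (I ∩ P i).ncard = 1) ↔
      (∃ S : Set (V ⊕ Option (Fin (Fintype.card V - k + k + 1))),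
        S.ncard ≤ Fintype.card V - k ∧
        (openNbhd (reductionGraph G P) S).ncard ≤ k + 1 ∧
        ((reductionGraph G P).induce Sᶜ).IsAcyclic) :=
  small_secluded_fvs_W1_reduction_general G k P hnonempty hdisj hcover
end

section
/- Let G be a graph with vertex set V and edge set E. Construct G' with vertex set V ∪ {x_e : e ∈ E}, where for each edge e = {u,v} ∈ E, x_e is adjacent exactly to u and v, and additionally all pairs of vertices in V are adjacent in G'. Assume k < |V| − 1. Then G contains a clique of size k if and only if G' contains an independent set U with |U| ≥ C(k,2) and |N_{G'}(U)| ≤ k. -/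
/-- The graph `G'` of the reduction: all pairs of original vertices are adjacent,
and for each edge `e = {u,v}` of `G` the new vertex `x_e` is adjacent exactly
to `u` and `v`. -/
def lsisGraph {V : Type*} (G : SimpleGraph V) : SimpleGraph (V ⊕ G.edgeSet) :=
  SimpleGraph.fromRel (fun a b =>
    match a, b with
    | Sum.inl a, Sum.inl b => a ≠ b
    | Sum.inl a, Sum.inr e => a ∈ (e : Sym2 V)
    | _, _ => False)

section Aux

variable {V : Type*} {G : SimpleGraph V}

lemma lsis_adj_inl_inl {a b : V} :
    (lsisGraph G).Adj (Sum.inl a) (Sum.inl b) ↔ a ≠ b := by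
  rw [lsisGraph, SimpleGraph.fromRel_adj]
  constructor
  · rintro ⟨-, h | h⟩
    · exact h
    · exact h.symm
  · intro h
    exact ⟨fun he => h (Sum.inl_injective he), Or.inl h⟩

lemma lsis_adj_inr_inl {e : G.edgeSet} {a : V} :
    (lsisGraph G).Adj (Sum.inr e) (Sum.inl a) ↔ a ∈ (e : Sym2 V) := by
  rw [lsisGraph, SimpleGraph.fromRel_adj]
  constructor
  · rintro ⟨-, h | h⟩
    · exact h.elim
    · exact h
  · intro h
    exact ⟨by simp, Or.inr h⟩

lemma lsis_not_adj_inr_inr {e f : G.edgeSet} :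
    ¬ (lsisGraph G).Adj (Sum.inr e) (Sum.inr f) := by
  rw [lsisGraph, SimpleGraph.fromRel_adj]
  rintro ⟨-, h | h⟩ <;> exact h

/-- The set of non-diagonal pairs with both members in `S`. -/
def pairsSet (S : Set V) : Set (Sym2 V) :=
  {p | ¬ p.IsDiag ∧ ∀ v ∈ p, v ∈ S}

lemma mem_pairsSet {S : Set V} {a b : V} :
    s(a, b) ∈ pairsSet S ↔ a ≠ b ∧ a ∈ S ∧ b ∈ S := by
  simp only [pairsSet, Set.mem_setOf_eq, Sym2.isDiag_iff_proj_eq, Sym2.mem_iff]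
  constructor
  · rintro ⟨hd, hm⟩
    exact ⟨hd, hm a (Or.inl rfl), hm b (Or.inr rfl)⟩
  · rintro ⟨hd, ha, hb⟩
    refine ⟨hd, ?_⟩
    rintro v (rfl | rfl)
    · exact ha
    · exact hb

lemma ncard_pairsSet (S : Set V) (hS : S.Finite) :
    (pairsSet S).ncard = S.ncard.choose 2 := by
  classical
  have himg : pairsSet S = Sym2.map (Subtype.val : S → V) '' {p : Sym2 S | ¬ p.IsDiag} := by
    ext p
    induction p using Sym2.ind with
    | _ a b =>
      constructor
      · intro hp
        rw [mem_pairsSet] at hp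
        obtain ⟨hd, ha, hb⟩ := hp
        refine ⟨s(⟨a, ha⟩, ⟨b, hb⟩), ?_, by simp⟩
        simp only [Set.mem_setOf_eq, Sym2.isDiag_iff_proj_eq]
        exact fun h => hd (congrArg Subtype.val h)
      · rintro ⟨q, hq, hmap⟩
        induction q using Sym2.ind with
        | _ x y =>
          simp only [Set.mem_setOf_eq, Sym2.isDiag_iff_proj_eq] at hq
          rw [Sym2.map_pair_eq] at hmap
          rw [← hmap, mem_pairsSet]
          exact ⟨fun h => hq (Subtype.ext h), x.2, y.2⟩
  haveI := hS.fintype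
  rw [himg, Set.ncard_image_of_injective _ (Sym2.map.injective Subtype.val_injective)]
  have h1 : ({p : Sym2 S | ¬ p.IsDiag} : Set (Sym2 S)).ncard
      = Nat.card {p : Sym2 S // ¬ p.IsDiag} := (Nat.card_coe_set_eq _).symm
  rw [h1, Nat.card_eq_fintype_card, Sym2.card_subtype_not_diag]
  congr 1
  rw [← Nat.card_coe_set_eq, Nat.card_eq_fintype_card]

end Aux

theorem large_secluded_independent_set_reduction {V : Type*} [Fintype V]
    (G : SimpleGraph V) (k : ℕ) (hk : k + 1 < Fintype.card V) :
    (∃ C : Set V, G.IsClique C ∧ C.ncard = k) ↔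
      (∃ U : Set (V ⊕ G.edgeSet), IsIndepSet (lsisGraph G) U ∧
        Nat.choose k 2 ≤ U.ncard ∧ (openNbhd (lsisGraph G) U).ncard ≤ k) := by
  classical
  constructor
  · rintro ⟨C, hC, hCk⟩
    have hCfin : C.Finite := Set.toFinite C
    set W : Set G.edgeSet := {e | ∀ v ∈ (e : Sym2 V), v ∈ C} with hWdef
    have hvalW : Subtype.val '' W = pairsSet C := by
      ext p
      constructor
      · rintro ⟨e, he, rfl⟩
        exact ⟨G.not_isDiag_of_mem_edgeSet e.2, he⟩
      · intro hp
        induction p using Sym2.ind with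
        | _ a b =>
          rw [mem_pairsSet] at hp
          obtain ⟨hne, ha, hb⟩ := hp
          have hadj : G.Adj a b := hC ha hb hne
          refine ⟨⟨s(a, b), (SimpleGraph.mem_edgeSet G).mpr hadj⟩, ?_, rfl⟩
          intro v hv
          rw [Sym2.mem_iff] at hv
          rcases hv with rfl | rfl
          · exact ha
          · exact hb
    refine ⟨Sum.inr '' W, ?_, ?_, ?_⟩
    · rintro a ⟨e, -, rfl⟩ b ⟨f, -, rfl⟩
      exact lsis_not_adj_inr_inr
    · rw [Set.ncard_image_of_injective _ Sum.inr_injective]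
      have : W.ncard = (Subtype.val '' W).ncard :=
        (Set.ncard_image_of_injective _ Subtype.val_injective).symm
      rw [this, hvalW, ncard_pairsSet C hCfin, hCk]
    · have hsub : openNbhd (lsisGraph G) (Sum.inr '' W) ⊆ Sum.inl '' C := by
        rintro x ⟨hx, u, ⟨e, he, rfl⟩, hadj⟩
        cases x with
        | inl a =>
          exact ⟨a, he a (lsis_adj_inr_inl.mp hadj), rfl⟩
        | inr f => exact absurd hadj lsis_not_adj_inr_inr
      calc (openNbhd (lsisGraph G) (Sum.inr '' W)).ncard
          ≤ (Sum.inl '' C).ncard := Set.ncard_le_ncard hsub (hCfin.image _)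
        _ = C.ncard := Set.ncard_image_of_injective _ Sum.inl_injective
        _ = k := hCk
  · rintro ⟨U, hInd, hUcard, hNcard⟩
    have hnoinl : ∀ v : V, Sum.inl v ∉ U := by
      intro v hv
      have hsub : (Sum.inl '' ({v}ᶜ : Set V) : Set (V ⊕ G.edgeSet)) ⊆ openNbhd (lsisGraph G) U := by
        rintro x ⟨w, hw, rfl⟩
        have hadj : (lsisGraph G).Adj (Sum.inl v) (Sum.inl w) :=
          lsis_adj_inl_inl.mpr (Ne.symm hw)
        exact ⟨fun hU => hInd _ hv _ hU hadj, Sum.inl v, hv, hadj⟩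
      have h1 : (Sum.inl '' ({v}ᶜ : Set V) : Set (V ⊕ G.edgeSet)).ncard = Fintype.card V - 1 := by
        rw [Set.ncard_image_of_injective _ Sum.inl_injective]
        have hcompl : ({v}ᶜ : Set V) = Set.univ \ {v} := Set.compl_eq_univ_diff _
        rw [hcompl, Set.ncard_diff_singleton_of_mem (Set.mem_univ v),
          Set.ncard_univ, Nat.card_eq_fintype_card]
      have h2 := Set.ncard_le_ncard hsub (Set.toFinite _)
      omega
    rcases Nat.lt_or_ge k 2 with hk2 | hk2
    · interval_cases k
      · exact ⟨∅, by simp [SimpleGraph.isClique_empty], by simp⟩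
      · have : Nonempty V := Fintype.card_pos_iff.mp (by omega)
        obtain ⟨v⟩ := this
        exact ⟨{v}, SimpleGraph.isClique_singleton v, by simp⟩
    · set W : Set G.edgeSet := Sum.inr ⁻¹' U with hWdef
      have hUW : U = Sum.inr '' W := by
        ext x
        cases x with
        | inl v => simp [hnoinl v]
        | inr e =>
          simp only [Set.mem_image, Set.mem_preimage, hWdef]
          constructor
          · intro h; exact ⟨e, h, rfl⟩
          · rintro ⟨f, hf, hfe⟩
            rwa [← Sum.inr_injective hfe]
      set S : Set V := {v | ∃ e ∈ W, v ∈ (e : Sym2 V)} with hSdef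
      have hSfin : S.Finite := Set.toFinite _
      have hSsub : Sum.inl '' S ⊆ openNbhd (lsisGraph G) U := by
        rintro x ⟨v, ⟨e, heW, hev⟩, rfl⟩
        refine ⟨hnoinl v, Sum.inr e, heW, lsis_adj_inr_inl.mpr hev⟩
      have hSk : S.ncard ≤ k := by
        have h2 := Set.ncard_le_ncard hSsub (Set.toFinite _)
        rw [Set.ncard_image_of_injective _ Sum.inl_injective] at h2
        omega
      have hWsub : Subtype.val '' W ⊆ pairsSet S := by
        rintro p ⟨e, heW, rfl⟩
        exact ⟨G.not_isDiag_of_mem_edgeSet e.2, fun v hv => ⟨e, heW, hv⟩⟩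
      have hUcard' : k.choose 2 ≤ (Subtype.val '' W).ncard := by
        rw [Set.ncard_image_of_injective _ Subtype.val_injective]
        rw [hUW, Set.ncard_image_of_injective _ Sum.inr_injective] at hUcard
        exact hUcard
      have hle : k.choose 2 ≤ (pairsSet S).ncard :=
        le_trans hUcard' (Set.ncard_le_ncard hWsub (Set.toFinite _))
      have hSk' : S.ncard = k := by
        rw [ncard_pairsSet S hSfin] at hle
        by_contra h
        have hlt : S.ncard ≤ k - 1 := by omega
        have h3 : S.ncard.choose 2 ≤ (k - 1).choose 2 := Nat.choose_le_choose 2 hlt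
        obtain ⟨m, rfl⟩ : ∃ m, k = m + 1 := ⟨k - 1, by omega⟩
        have hsplit : (m + 1).choose 2 = m.choose 1 + m.choose 2 := Nat.choose_succ_succ m 1
        rw [Nat.choose_one_right] at hsplit
        simp only [Nat.add_sub_cancel] at h3 hlt
        omega
      have heq : Subtype.val '' W = pairsSet S :=
        Set.eq_of_subset_of_ncard_le hWsub
          (by rw [ncard_pairsSet S hSfin, hSk']; exact hUcard') (Set.toFinite _)
      refine ⟨S, ?_, hSk'⟩
      intro a ha b hb hab
      have hp : s(a, b) ∈ pairsSet S := mem_pairsSet.mpr ⟨hab, ha, hb⟩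
      rw [← heq] at hp
      obtain ⟨e, -, hev⟩ := hp
      have he2 := e.2
      rw [hev] at he2
      exact (SimpleGraph.mem_edgeSet G).mp he2
end

section
/- Let G₁, …, G_p be graphs with designated vertices s_i, t_i in G_i, and let G be obtained by taking their disjoint union, identifying t_i with s_{i+1} for i = 1,…,p−1 into vertices st_i, and attaching k+ℓ+1 new degree-one neighbors to each st_i (1 ≤ i ≤ p−1). Set s = s₁ and t = t_p. Then G has an s-t separator S with |S| ≤ k and |N_G(S)| ≤ ℓ if and only if there exists q ∈ {1,…,p} such that G_q has an s_q-t_q separator S_q with |S_q| ≤ k and |N_{G_q}(S_q)| ≤ ℓ. -/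
/-- `S` is an `s`-`t` separator: it avoids `s` and `t` and meets every `s`-`t` walk. -/
def Separates {V : Type*} (G : SimpleGraph V) (s t : V) (S : Set V) : Prop :=
  s ∉ S ∧ t ∉ S ∧ ∀ w : G.Walk s t, ∃ v ∈ w.support, v ∈ S

/-!
Every `s`-`t` walk passes through the glue vertices `t 0, …, t (p - 2)` in order. No glue vertex
lies in a set `S` with `|S| ≤ k` and `|N(S)| ≤ ℓ`, since its `k + ℓ + 1` pendant neighbours would
all lie in `S ∪ N(S)`. So if every block had an `s q`-`t q` walk avoiding `S`, these would
concatenate to an `s`-`t` walk avoiding `S`; hence `S` restricted to some block separates it.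

Conversely, a separator `Sq` of block `q` avoids `s q` and `t q`, so its neighbours stay inside the
block. It separates `s` from `t` in `G`: the vertices before block `q`, together with the vertices
reachable from `s q` inside the block avoiding `Sq`, form a set that contains `s`, is closed under
steps avoiding `Sq`, and does not contain `t`.
-/

namespace SimpleGraph

variable {V : Type*} {G : SimpleGraph V}

def ReachableAvoiding (G : SimpleGraph V) (S : Set V) (u v : V) : Prop :=
  ∃ w : G.Walk u v, ∀ x ∈ w.support, x ∉ S

namespace ReachableAvoiding

variable {S : Set V} {u v w : V}

lemma refl (hu : u ∉ S) : G.ReachableAvoiding S u u :=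
  ⟨.nil, by simpa using hu⟩

lemma trans (huv : G.ReachableAvoiding S u v) (hvw : G.ReachableAvoiding S v w) :
    G.ReachableAvoiding S u w := by
  obtain ⟨p, hp⟩ := huv
  obtain ⟨q, hq⟩ := hvw
  refine ⟨p.append q, fun x hx => ?_⟩
  rw [Walk.support_append, List.mem_append] at hx
  exact hx.elim (hp x) (fun hx => hq x (List.mem_of_mem_tail hx))

lemma step (huv : G.ReachableAvoiding S u v) (hadj : G.Adj v w) (hw : w ∉ S) :
    G.ReachableAvoiding S u w := by
  obtain ⟨p, hp⟩ := huv
  have hv : v ∉ S := hp v p.end_mem_support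
  exact ReachableAvoiding.trans ⟨p, hp⟩ ⟨hadj.toWalk, by simp [hv, hw]⟩

lemma of_induce {A : Set V} {a b : A}
    (h : (G.induce A).ReachableAvoiding (Subtype.val ⁻¹' S) a b) :
    G.ReachableAvoiding S a b := by
  obtain ⟨p, hp⟩ := h
  have hmap : ∀ x ∈ (p.map (Embedding.induce A).toHom).support, x ∉ S := by
    intro x hx
    rw [Walk.support_map, List.mem_map] at hx
    obtain ⟨y, hy, rfl⟩ := hx
    exact hp y hy
  exact ⟨_, hmap⟩

lemma mem_of_closed {X : Set V} (h : G.ReachableAvoiding S u v) (hu : u ∈ X)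
    (hX : ∀ a ∈ X, ∀ b, G.Adj a b → b ∉ S → b ∈ X) : v ∈ X := by
  obtain ⟨p, hp⟩ := h
  induction p with
  | nil => exact hu
  | cons hadj p ih =>
    exact ih (hX _ hu _ hadj (hp _ (by simp))) (fun x hx => hp x (by simp [hx]))

end ReachableAvoiding

end SimpleGraph

open SimpleGraph

section

variable {V : Type*} {G : SimpleGraph V}

theorem separates_iff_not_reachableAvoiding {s t : V} {S : Set V} :
    Separates G s t S ↔ s ∉ S ∧ t ∉ S ∧ ¬ G.ReachableAvoiding S s t := by
  simp [Separates, ReachableAvoiding]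

theorem notMem_of_ncard_lt_ncard_neighborSet [Finite V] {S : Set V} {x : V}
    (h : S.ncard + (openNbhd G S).ncard < (G.neighborSet x).ncard) : x ∉ S := by
  intro hx
  have hsub : G.neighborSet x ⊆ S ∪ openNbhd G S := fun y hy =>
    or_iff_not_imp_left.2 fun hyS => ⟨hyS, x, hx, hy⟩
  have := (Set.ncard_le_ncard hsub).trans (Set.ncard_union_le S (openNbhd G S))
  omega

variable {A : Set V}

theorem ncard_preimage_val_le [Finite V] (S : Set V) :
    (Subtype.val ⁻¹' S : Set A).ncard ≤ S.ncard :=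
  Set.ncard_le_ncard_of_injOn Subtype.val (fun _ h => h) Subtype.val_injective.injOn

theorem ncard_openNbhd_induce_preimage_le [Finite V] (S : Set V) :
    (openNbhd (G.induce A) (Subtype.val ⁻¹' S)).ncard ≤ (openNbhd G S).ncard :=
  Set.ncard_le_ncard_of_injOn Subtype.val (fun _ ⟨hx, u, hu, hadj⟩ => ⟨hx, u, hu, hadj⟩)
    Subtype.val_injective.injOn

theorem ncard_openNbhd_image_val_le [Finite V] {T : Set A}
    (hT : ∀ x ∈ T, G.neighborSet x ⊆ A) :
    (openNbhd G (Subtype.val '' T)).ncard ≤ (openNbhd (G.induce A) T).ncard := by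
  have hsub : openNbhd G (Subtype.val '' T) ⊆ Subtype.val '' openNbhd (G.induce A) T := by
    rintro v ⟨hv, _, ⟨x, hx, rfl⟩, hadj⟩
    exact ⟨⟨v, hT x hx hadj⟩, ⟨fun h => hv ⟨_, h, rfl⟩, x, hx, hadj⟩, rfl⟩
  exact (Set.ncard_le_ncard hsub).trans_eq (Set.ncard_image_of_injective _ Subtype.val_injective)

end

structure IsChainComposition {W : Type*} (G : SimpleGraph W) (p : ℕ) (A : Fin p → Set W)
    (s t : Fin p → W) : Prop where
  s_ne_t : ∀ i, s i ≠ t i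
  s_mem : ∀ i, s i ∈ A i
  t_mem : ∀ i, t i ∈ A i
  t_eq_s : ∀ i j : Fin p, (j : ℕ) = i + 1 → t i = s j
  inter : ∀ i j : Fin p, i < j →
    ((j : ℕ) = i + 1 → A i ∩ A j = {t i}) ∧ ((j : ℕ) ≠ i + 1 → A i ∩ A j = ∅)
  pendant : ∀ w, w ∉ ⋃ i, A i → ∃ i, G.neighborSet w = {t i}
  adj : ∀ a b, G.Adj a b → (∃ i, a ∈ A i ∧ b ∈ A i) ∨ a ∉ ⋃ i, A i ∨ b ∉ ⋃ i, A i

def verticesBefore {W : Type*} (G : SimpleGraph W) {p : ℕ} (A : Fin p → Set W) (t : Fin p → W)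
    (q : Fin p) : Set W :=
  {v | ∃ i < q, v ∈ A i ∨ (v ∉ ⋃ j, A j ∧ G.Adj v (t i))}

namespace IsChainComposition

variable {W : Type*} {G : SimpleGraph W} {p : ℕ} {A : Fin p → Set W} {s t : Fin p → W}
  (H : IsChainComposition G p A s t)
include H

lemma eq_t_of_mem_of_mem {v : W} {i j : Fin p} (hi : v ∈ A i) (hj : v ∈ A j) (hij : i < j) :
    (j : ℕ) = i + 1 ∧ v = t i := by
  have hv : v ∈ A i ∩ A j := ⟨hi, hj⟩
  by_cases h : (j : ℕ) = i + 1
  · rw [(H.inter i j hij).1 h] at hv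
    exact ⟨h, hv⟩
  · rw [(H.inter i j hij).2 h] at hv
    exact hv.elim

lemma eq_or_eq_succ_of_t_mem {i j : Fin p} (h : t j ∈ A i) : i = j ∨ (i : ℕ) = j + 1 := by
  rcases lt_trichotomy i j with hij | rfl | hji
  · obtain ⟨hj, he⟩ := H.eq_t_of_mem_of_mem h (H.t_mem j) hij
    exact absurd ((H.t_eq_s i j hj).symm.trans he.symm) (H.s_ne_t j)
  · exact .inl rfl
  · exact .inr (H.eq_t_of_mem_of_mem (H.t_mem j) h hji).1

lemma eq_t_of_adj_pendant {v w : W} (hv : v ∉ ⋃ i, A i) (hadj : G.Adj v w) :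
    ∃ i, G.neighborSet v = {t i} ∧ w = t i := by
  obtain ⟨i, hi⟩ := H.pendant v hv
  have hw : w ∈ G.neighborSet v := hadj
  exact ⟨i, hi, by rwa [hi] at hw⟩

lemma mem_or_of_adj {q : Fin p} {x y : W} (hx : x ∈ A q) (hadj : G.Adj x y) :
    y ∈ A q ∨ x = t q ∨ ∃ i < q, x ∈ A i := by
  rcases H.adj x y hadj with ⟨j, hxj, hyj⟩ | hx' | hy
  · rcases lt_trichotomy j q with hjq | rfl | hqj
    · exact .inr (.inr ⟨j, hjq, hxj⟩)
    · exact .inl hyj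
    · exact .inr (.inl (H.eq_t_of_mem_of_mem hx hxj hqj).2)
  · exact absurd (Set.mem_iUnion.2 ⟨q, hx⟩) hx'
  · obtain ⟨j, -, rfl⟩ := H.eq_t_of_adj_pendant hy hadj.symm
    rcases H.eq_or_eq_succ_of_t_mem hx with rfl | hq
    · exact .inr (.inl rfl)
    · exact .inr (.inr ⟨j, by omega, H.t_mem j⟩)

lemma neighborSet_subset {q : Fin p} {x : W} (hx : x ∈ A q) (hs : x ≠ s q) (ht : x ≠ t q) :
    G.neighborSet x ⊆ A q := by
  intro y hadj
  rcases H.mem_or_of_adj hx hadj with hy | hxt | ⟨i, hiq, hxi⟩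
  · exact hy
  · exact absurd hxt ht
  · obtain ⟨hq, rfl⟩ := H.eq_t_of_mem_of_mem hxi hx hiq
    exact absurd (H.t_eq_s i q hq) hs

lemma mem_verticesBefore_or_of_adj {q : Fin p} {a b : W} (ha : a ∈ verticesBefore G A t q)
    (hadj : G.Adj a b) : b ∈ verticesBefore G A t q ∨ (a = s q ∧ b ∈ A q) := by
  obtain ⟨i, hiq, hai | ⟨ha, hat⟩⟩ := ha
  · rcases H.adj a b hadj with ⟨j, haj, hbj⟩ | ha | hb
    · rcases lt_or_ge j q with hjq | hqj
      · exact .inl ⟨j, hjq, .inl hbj⟩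
      · obtain ⟨hj, rfl⟩ := H.eq_t_of_mem_of_mem hai haj (hiq.trans_le hqj)
        obtain rfl : j = q := by omega
        exact .inr ⟨H.t_eq_s i j hj, hbj⟩
    · exact absurd (Set.mem_iUnion.2 ⟨i, hai⟩) ha
    · obtain ⟨j, -, rfl⟩ := H.eq_t_of_adj_pendant hb hadj.symm
      have hjq : j < q := by rcases H.eq_or_eq_succ_of_t_mem hai with rfl | h <;> omega
      exact .inl ⟨j, hjq, .inr ⟨hb, hadj.symm⟩⟩
  · obtain ⟨j, hj, rfl⟩ := H.eq_t_of_adj_pendant ha hadj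
    have hti : t i ∈ G.neighborSet a := hat
    rw [hj, Set.mem_singleton_iff] at hti
    exact .inl ⟨i, hiq, .inl (hti ▸ H.t_mem i)⟩

lemma eq_of_s_mem {i q : Fin p} (hi : (i : ℕ) = 0) (h : s i ∈ A q) : q = i := by
  by_contra hq
  obtain ⟨-, he⟩ := H.eq_t_of_mem_of_mem (H.s_mem i) h (by omega)
  exact H.s_ne_t i he

lemma eq_of_t_mem {j q : Fin p} (hj : (j : ℕ) + 1 = p) (h : t j ∈ A q) : q = j := by
  rcases H.eq_or_eq_succ_of_t_mem h with rfl | hq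
  · rfl
  · omega

lemma reachableAvoiding_s_t {S : Set W} {i : Fin p} (hi : (i : ℕ) = 0)
    (hS : ∀ q, (G.induce (A q)).ReachableAvoiding (Subtype.val ⁻¹' S)
      ⟨s q, H.s_mem q⟩ ⟨t q, H.t_mem q⟩) (j : Fin p) :
    G.ReachableAvoiding S (s i) (t j) := by
  obtain ⟨n, hn⟩ := j
  induction n with
  | zero =>
    obtain rfl : i = ⟨0, hn⟩ := Fin.ext hi
    exact (hS _).of_induce
  | succ n ih =>
    have hreach := ih (by omega)
    rw [H.t_eq_s ⟨n, _⟩ ⟨n + 1, hn⟩ rfl] at hreach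
    exact hreach.trans (hS _).of_induce

theorem exists_separates_block [Finite W] {k ℓ : ℕ}
    (hcount : ∀ i : Fin p, (i : ℕ) + 1 < p →
      {w : W | w ∉ (⋃ j, A j) ∧ G.neighborSet w = {t i}}.ncard = k + ℓ + 1)
    {i j : Fin p} (hi : (i : ℕ) = 0) (hj : (j : ℕ) + 1 = p) {S : Set W}
    (hS : Separates G (s i) (t j) S) (hk : S.ncard ≤ k) (hl : (openNbhd G S).ncard ≤ ℓ) :
    ∃ q, Separates (G.induce (A q)) ⟨s q, H.s_mem q⟩ ⟨t q, H.t_mem q⟩ (Subtype.val ⁻¹' S) := by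
  obtain ⟨hsi, htj, hsep⟩ := separates_iff_not_reachableAvoiding.1 hS
  have hglue (g : Fin p) (hg : (g : ℕ) + 1 < p) : t g ∉ S := by
    refine notMem_of_ncard_lt_ncard_neighborSet (G := G) ?_
    have hpend : {w : W | w ∉ (⋃ j, A j) ∧ G.neighborSet w = {t g}} ⊆ G.neighborSet (t g) :=
      fun w ⟨_, hw⟩ => G.adj_symm (show t g ∈ G.neighborSet w by simp [hw])
    have := Set.ncard_le_ncard hpend
    have := hcount g hg
    omega
  have hs (q : Fin p) : s q ∉ S := by
    by_cases hq : (q : ℕ) = 0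
    · exact Fin.ext (hq.trans hi.symm) ▸ hsi
    · rw [← H.t_eq_s ⟨q - 1, by omega⟩ q (by simp; omega)]
      exact hglue _ (by simp; omega)
  have ht (q : Fin p) : t q ∉ S := by
    by_cases hq : (q : ℕ) + 1 = p
    · exact Fin.ext (by omega : (q : ℕ) = j) ▸ htj
    · exact hglue q (by omega)
  by_contra! hno
  refine hsep (H.reachableAvoiding_s_t hi (fun q => ?_) j)
  by_contra hq
  exact hno q (separates_iff_not_reachableAvoiding.2 ⟨hs q, ht q, hq⟩)

lemma val_ne_of_mem_separator {q : Fin p} {Sq : Set (A q)}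
    (hSq : Separates (G.induce (A q)) ⟨s q, H.s_mem q⟩ ⟨t q, H.t_mem q⟩ Sq) {x : A q}
    (hx : x ∈ Sq) : (x : W) ≠ s q ∧ (x : W) ≠ t q :=
  ⟨fun h => hSq.1 ((show x = ⟨s q, H.s_mem q⟩ from Subtype.ext h) ▸ hx),
    fun h => hSq.2.1 ((show x = ⟨t q, H.t_mem q⟩ from Subtype.ext h) ▸ hx)⟩

lemma verticesBefore_union_reachableAvoiding_closed {q : Fin p} {Sq : Set (A q)}
    (hsq : ⟨s q, H.s_mem q⟩ ∉ Sq)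
    (htq : ¬ (G.induce (A q)).ReachableAvoiding Sq ⟨s q, H.s_mem q⟩ ⟨t q, H.t_mem q⟩)
    {a b : W} (ha : a ∈ verticesBefore G A t q ∪
      Subtype.val '' {x | (G.induce (A q)).ReachableAvoiding Sq ⟨s q, H.s_mem q⟩ x})
    (hadj : G.Adj a b) (hb : b ∉ Subtype.val '' Sq) :
    b ∈ verticesBefore G A t q ∪
      Subtype.val '' {x | (G.induce (A q)).ReachableAvoiding Sq ⟨s q, H.s_mem q⟩ x} := by
  have hbefore {a : W} (ha : a ∈ verticesBefore G A t q) (hadj : G.Adj a b) :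
      b ∈ verticesBefore G A t q ∪
        Subtype.val '' {x | (G.induce (A q)).ReachableAvoiding Sq ⟨s q, H.s_mem q⟩ x} := by
    rcases H.mem_verticesBefore_or_of_adj ha hadj with hb' | ⟨rfl, hbq⟩
    · exact .inl hb'
    · exact .inr ⟨⟨b, hbq⟩, (ReachableAvoiding.refl hsq).step hadj fun h => hb ⟨_, h, rfl⟩, rfl⟩
  rcases ha with ha | ⟨a, ha, rfl⟩
  · exact hbefore ha hadj
  rcases H.mem_or_of_adj a.2 hadj with hbq | hat | ⟨i, hiq, hai⟩
  · exact .inr ⟨⟨b, hbq⟩, ReachableAvoiding.step ha hadj fun h => hb ⟨_, h, rfl⟩, rfl⟩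
  · exact absurd ((show a = ⟨t q, H.t_mem q⟩ from Subtype.ext hat) ▸ ha) htq
  · exact hbefore ⟨i, hiq, .inl hai⟩ hadj

theorem separates_image_val {q i j : Fin p} (hi : (i : ℕ) = 0) (hj : (j : ℕ) + 1 = p)
    {Sq : Set (A q)} (hSq : Separates (G.induce (A q)) ⟨s q, H.s_mem q⟩ ⟨t q, H.t_mem q⟩ Sq) :
    Separates G (s i) (t j) (Subtype.val '' Sq) := by
  obtain ⟨hsq, -, hsep⟩ := separates_iff_not_reachableAvoiding.1 hSq
  refine separates_iff_not_reachableAvoiding.2 ⟨?_, ?_, fun hreach => ?_⟩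
  · rintro ⟨x, hx, hxs⟩
    obtain rfl := H.eq_of_s_mem hi (hxs ▸ x.2)
    exact (H.val_ne_of_mem_separator hSq hx).1 hxs
  · rintro ⟨x, hx, hxt⟩
    obtain rfl := H.eq_of_t_mem hj (hxt ▸ x.2)
    exact (H.val_ne_of_mem_separator hSq hx).2 hxt
  have hsi : s i ∈ verticesBefore G A t q ∪
      Subtype.val '' {x | (G.induce (A q)).ReachableAvoiding Sq ⟨s q, H.s_mem q⟩ x} := by
    by_cases hq : q = i
    · subst hq
      exact .inr ⟨_, ReachableAvoiding.refl hsq, rfl⟩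
    · exact .inl ⟨i, by omega, .inl (H.s_mem i)⟩
  rcases hreach.mem_of_closed hsi fun a ha b hadj hb =>
      H.verticesBefore_union_reachableAvoiding_closed hsq hsep ha hadj hb with
    ⟨i', hi'q, hti' | ⟨hti', -⟩⟩ | ⟨x, hx, hxt⟩
  · rcases H.eq_or_eq_succ_of_t_mem hti' with rfl | h <;> omega
  · exact hti' (Set.mem_iUnion.2 ⟨j, H.t_mem j⟩)
  · obtain rfl := H.eq_of_t_mem hj (hxt ▸ x.2)
    exact hsep ((show x = ⟨t q, H.t_mem q⟩ from Subtype.ext hxt) ▸ hx)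

end IsChainComposition

theorem small_secluded_separator_or_composition {W : Type*} [Fintype W]
    (G : SimpleGraph W) (p k ℓ : ℕ) (hp : 0 < p)
    (A : Fin p → Set W) (s t : Fin p → W)
    (hst : ∀ i, s i ≠ t i)
    (hsA : ∀ i, s i ∈ A i) (htA : ∀ i, t i ∈ A i)
    -- consecutive blocks are glued at `t i = s (i+1)`:
    (hglue : ∀ i j : Fin p, (j : ℕ) = (i : ℕ) + 1 → t i = s j)
    (hinter : ∀ i j : Fin p, i < j →
      (((j : ℕ) = (i : ℕ) + 1 → A i ∩ A j = {t i}) ∧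
       ((j : ℕ) ≠ (i : ℕ) + 1 → A i ∩ A j = ∅)))
    -- all remaining vertices are pendant (degree-one) neighbors of the glue
    -- vertices `st_i = t i`, `k + ℓ + 1` of them for each:
    (hpend : ∀ w : W, w ∉ (⋃ i, A i) →
      ∃ i : Fin p, (i : ℕ) + 1 < p ∧ G.neighborSet w = {t i})
    (hcount : ∀ i : Fin p, (i : ℕ) + 1 < p →
      {w : W | w ∉ (⋃ j, A j) ∧ G.neighborSet w = {t i}}.ncard = k + ℓ + 1)
    -- every edge lies inside a block or is a pendant edge:
    (hedge : ∀ a b : W, G.Adj a b →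
      (∃ i, a ∈ A i ∧ b ∈ A i) ∨ a ∉ (⋃ i, A i) ∨ b ∉ (⋃ i, A i)) :
    (∃ S : Set W,
        Separates G (s ⟨0, hp⟩) (t ⟨p - 1, Nat.sub_lt hp one_pos⟩) S ∧
        S.ncard ≤ k ∧ (openNbhd G S).ncard ≤ ℓ) ↔
      (∃ q : Fin p, ∃ Sq : Set (A q),
        Separates (G.induce (A q)) ⟨s q, hsA q⟩ ⟨t q, htA q⟩ Sq ∧
        Sq.ncard ≤ k ∧ (openNbhd (G.induce (A q)) Sq).ncard ≤ ℓ) := by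
  have H : IsChainComposition G p A s t :=
    ⟨hst, hsA, htA, hglue, hinter, fun w hw => (hpend w hw).imp fun _ => And.right, hedge⟩
  have hlast : p - 1 + 1 = p := Nat.sub_add_cancel hp
  constructor
  · rintro ⟨S, hS, hk, hl⟩
    obtain ⟨q, hq⟩ := H.exists_separates_block hcount rfl hlast hS hk hl
    refine ⟨q, _, hq, ?_, (ncard_openNbhd_induce_preimage_le S).trans hl⟩
    exact (ncard_preimage_val_le S).trans hk
  · rintro ⟨q, Sq, hSq, hk, hl⟩
    refine ⟨_, H.separates_image_val rfl hlast hSq, ?_, ?_⟩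
    · exact (Set.ncard_image_of_injective _ Subtype.val_injective).trans_le hk
    · refine (ncard_openNbhd_image_val_le fun x hx => ?_).trans hl
      exact H.neighborSet_subset x.2 (H.val_ne_of_mem_separator hSq hx).1
        (H.val_ne_of_mem_separator hSq hx).2
end
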